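/- Let T be a triangulated category satisfying the octahedral axiom, P a connective class of objects closed under isomorphisms and finite direct sums containing 0, and I ⊆ P a subclass closed under isomorphisms and finite direct sums containing 0. Fix d ≥ 1 and set A^{(d+1)} := (P ∗ ΣP ∗ ⋯ ∗ Σ^{d+1}P) ∩ { X : Hom_T(X, Σ^m I') = 0 for all I' ∈ I and all m ≥ 1 }. If X and Y belong to A^{(d+1)} and Y ≅ X ⊕ Z in T, then Z belongs to A^{(d+1)}. In particular, A^{(d+1)} is stable under kernels of retractions. -/

import Mathlib

/-!
Statement 2: the class `A^{(d+1)} = (P ∗ ΣP ∗ ⋯ ∗ Σ^{d+1}P) ∩ ker Ext^{≥1}(-, I)` is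
stable under direct summands (kernels of retractions).
-/

open CategoryTheory Limits Pretriangulated

universe v u

namespace AuslanderIyamaStmt2

variable {C : Type u} [Category.{v} C] [HasZeroObject C] [HasShift C ℤ] [Preadditive C]
  [∀ n : ℤ, (shiftFunctor C n).Additive] [Pretriangulated C] [HasBinaryBiproducts C]

/-- `S₁ ∗ S₂`: objects `Y` fitting in a distinguished triangle `X ⟶ Y ⟶ Z ⟶ X⟦1⟧`
with `X ∈ S₁` and `Z ∈ S₂`. -/
def star (S₁ S₂ : Set C) : Set C :=
  {Y | ∃ (X Z : C) (f : X ⟶ Y) (g : Y ⟶ Z) (h : Z ⟶ X⟦(1 : ℤ)⟧),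
    (Triangle.mk f g h ∈ distTriang C) ∧ X ∈ S₁ ∧ Z ∈ S₂}

/-- `Σⁿ S`, closed under isomorphism. -/
def shiftSet (n : ℤ) (S : Set C) : Set C :=
  {X | ∃ Y ∈ S, Nonempty (X ≅ Y⟦n⟧)}

/-- `V n = P ∗ ΣP ∗ ⋯ ∗ Σⁿ P` (associated to the left; by the octahedral axiom `∗` is
associative so the grouping is irrelevant). -/
def V (P : Set C) : ℕ → Set C
  | 0 => P
  | n + 1 => star (V P n) (shiftSet ((n : ℤ) + 1) P)

/-- The kernel class `{X : Hom(X, Σ^m I') = 0 for all I' ∈ I, m ≥ 1}`. -/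
def extKer (I : Set C) : Set C :=
  {X | ∀ I' ∈ I, ∀ m : ℤ, 1 ≤ m → ∀ f : X ⟶ I'⟦m⟧, f = 0}

/-! ### Auxiliary lemmas -/

section Aux

variable {P : Set C}

lemma mem_star_of_triangle {S₁ S₂ : Set C} (T : Triangle C) (hT : T ∈ distTriang C)
    (h₁ : T.obj₁ ∈ S₁) (h₃ : T.obj₃ ∈ S₂) : T.obj₂ ∈ star S₁ S₂ :=
  ⟨T.obj₁, T.obj₃, T.mor₁, T.mor₂, T.mor₃, hT, h₁, h₃⟩

lemma star_iso {S₁ S₂ : Set C} {Y Y' : C} (e : Y ≅ Y') (h : Y ∈ star S₁ S₂) :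
    Y' ∈ star S₁ S₂ := by
  obtain ⟨A, B, f, g, h', hT, h₁, h₂⟩ := h
  refine ⟨A, B, f ≫ e.hom, e.inv ≫ g, h', ?_, h₁, h₂⟩
  refine isomorphic_distinguished _ hT _ ?_
  exact Triangle.isoMk _ _ (Iso.refl _) e.symm (Iso.refl _) (by simp [Triangle.mk]) (by simp [Triangle.mk]) (by simp [Triangle.mk])

lemma V_iso (hPiso : ∀ ⦃X Y : C⦄, (X ≅ Y) → X ∈ P → Y ∈ P) :
    ∀ (k : ℕ) {A B : C}, (A ≅ B) → A ∈ V P k → B ∈ V P k := by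
  intro k
  induction k with
  | zero => exact fun e hA => hPiso e hA
  | succ m _ => exact fun e hA => star_iso e hA

lemma zero_of_comp_iso {A B S S' : C} (eA : S ≅ A) (eB : S' ≅ B) (f : S ⟶ S')
    (h : eA.inv ≫ f ≫ eB.hom = 0) : f = 0 := by
  have : eA.hom ≫ (eA.inv ≫ f ≫ eB.hom) ≫ eB.inv = f := by simp
  rw [← this, h]; simp

lemma shift_hom_zero
    (hPconn : ∀ ⦃X Y : C⦄, X ∈ P → Y ∈ P → ∀ n : ℤ, 1 ≤ n → ∀ f : X ⟶ Y⟦n⟧, f = 0)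
    {R Q : C} (hR : R ∈ P) (hQ : Q ∈ P) {a b : ℤ} (hab : a + 1 ≤ b)
    (f : R⟦a⟧ ⟶ Q⟦b⟧) : f = 0 := by
  have h1 : (1 : ℤ) ≤ b + (-a) := by omega
  set F := shiftFunctor C (-a) with hF
  have e1 : (F.obj (R⟦a⟧) : C) ≅ R := (shiftFunctorCompIsoId C a (-a) (by omega)).app R
  have e2 : (F.obj (Q⟦b⟧) : C) ≅ Q⟦b + (-a)⟧ :=
    ((shiftFunctorAdd' C b (-a) (b + (-a)) rfl).app Q).symm
  have hz : e1.inv ≫ F.map f ≫ e2.hom = 0 := hPconn hR hQ _ h1 _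
  have hFf : F.map f = 0 := by
    have : e1.hom ≫ (e1.inv ≫ F.map f ≫ e2.hom) ≫ e2.inv = F.map f := by simp
    rw [← this, hz]; simp
  apply F.map_injective
  rw [hFf, F.map_zero]

lemma shiftSet_hom_zero
    (hPconn : ∀ ⦃X Y : C⦄, X ∈ P → Y ∈ P → ∀ n : ℤ, 1 ≤ n → ∀ f : X ⟶ Y⟦n⟧, f = 0)
    {a b : ℤ} {S S' : C} (hS : S ∈ shiftSet a P) (hS' : S' ∈ shiftSet b P)
    (hab : a + 1 ≤ b) (f : S ⟶ S') : f = 0 := by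
  obtain ⟨R, hR, ⟨eR⟩⟩ := hS
  obtain ⟨Q, hQ, ⟨eQ⟩⟩ := hS'
  exact zero_of_comp_iso eR eQ f (shift_hom_zero hPconn hR hQ hab _)

lemma V_hom_zero
    (hPconn : ∀ ⦃X Y : C⦄, X ∈ P → Y ∈ P → ∀ n : ℤ, 1 ≤ n → ∀ f : X ⟶ Y⟦n⟧, f = 0) :
    ∀ (k : ℕ) {A : C}, A ∈ V P k → ∀ {b : ℤ}, (k : ℤ) + 1 ≤ b →
      ∀ {S : C}, S ∈ shiftSet b P → ∀ f : A ⟶ S, f = 0 := by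
  intro k
  induction k with
  | zero =>
    intro A hA b hb S hS f
    obtain ⟨Q, hQ, ⟨eQ⟩⟩ := hS
    refine zero_of_comp_iso ((shiftFunctorZero C ℤ).app A).symm eQ f ?_
    exact shift_hom_zero hPconn hA hQ (by omega) _
  | succ m ih =>
    intro A hA b hb S hS f
    simp only [V] at hA
    obtain ⟨A₁, S₀, a₁, a₂, a₃, hT, h₁, h₂⟩ := hA
    have hb' : (m : ℤ) + 1 ≤ b := by push_cast at hb; omega
    have h0 : a₁ ≫ f = 0 := ih h₁ (by omega) hS _
    obtain ⟨g, hg⟩ := Triangle.yoneda_exact₂ _ hT f h0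
    have hgz : g = 0 := shiftSet_hom_zero hPconn h₂ hS (by push_cast at hb ⊢; omega) g
    rw [hg, hgz, comp_zero]; rfl

/-- shift of a biproduct -/
noncomputable def biprodShiftIso (F : C ⥤ C) [F.Additive] (A B : C) :
    F.obj (A ⊞ B) ≅ F.obj A ⊞ F.obj B where
  hom := biprod.lift (F.map biprod.fst) (F.map biprod.snd)
  inv := biprod.desc (F.map biprod.inl) (F.map biprod.inr)
  hom_inv_id := by
    rw [biprod.lift_desc, ← F.map_comp, ← F.map_comp, ← F.map_add, biprod.total, F.map_id]
  inv_hom_id := by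
    apply biprod.hom_ext' <;> apply biprod.hom_ext <;>
      simp [← F.map_comp]

/-- Lemma S: absorption of a `Σᵏ P` summand into `V P k`. -/
lemma biprodV [IsTriangulated C]
    (hPiso : ∀ ⦃X Y : C⦄, (X ≅ Y) → X ∈ P → Y ∈ P)
    (hPsum : ∀ ⦃X Y : C⦄, X ∈ P → Y ∈ P → (X ⊞ Y) ∈ P) :
    ∀ (k : ℕ) {B R' : C}, B ∈ V P k → R' ∈ shiftSet (k : ℤ) P → (B ⊞ R') ∈ V P k := by
  intro k
  induction k with
  | zero =>
    intro B R' hB hR'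
    obtain ⟨R, hR, ⟨eR⟩⟩ := hR'
    have eR' : R' ≅ R := eR ≪≫ (shiftFunctorZero C ℤ).app R
    exact hPiso (biprod.mapIso (Iso.refl B) eR'.symm) (hPsum hB hR)
  | succ m _ =>
    intro B R' hB hR'
    simp only [V] at hB ⊢
    obtain ⟨B₁, S, a, b, c, hT, h₁, hS⟩ := hB
    have hR'' : R' ∈ shiftSet ((m : ℤ) + 1) P := by
      rwa [show ((m + 1 : ℕ) : ℤ) = (m : ℤ) + 1 by push_cast; ring] at hR'
    obtain ⟨K, k₁, k₂, hK⟩ := distinguished_cocone_triangle (a ≫ (biprod.inl : B ⟶ B ⊞ R'))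
    have oct := Triangulated.someOctahedron (u₁₂ := a) (u₂₃ := (biprod.inl : B ⟶ B ⊞ R'))
      rfl hT (binaryBiproductTriangle_distinguished B R') hK
    have h0 : (Triangle.mk oct.m₁ oct.m₃ ((0 : R' ⟶ B⟦(1:ℤ)⟧) ≫ b⟦1⟧')).mor₃ = 0 := by
      simp [Triangle.mk]; rfl
    obtain ⟨eK, -, -⟩ := exists_iso_binaryBiproduct_of_distTriang _ oct.mem h0
    refine mem_star_of_triangle (Triangle.mk (a ≫ biprod.inl) k₁ k₂) hK h₁ ?_
    obtain ⟨Q, hQ, ⟨eS⟩⟩ := hS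
    obtain ⟨R, hR, ⟨eR⟩⟩ := hR''
    refine ⟨Q ⊞ R, hPsum hQ hR, ⟨?_⟩⟩
    exact eK ≪≫ biprod.mapIso eS eR ≪≫
      (biprodShiftIso (shiftFunctor C ((m : ℤ) + 1)) Q R).symm

/-- Lemma H: the cone of a map from an object of `Σᵏ P` to an object of `V P n`, `k < n`,
remains in `V P n`. -/
lemma coneH [IsTriangulated C]
    (hPiso : ∀ ⦃X Y : C⦄, (X ≅ Y) → X ∈ P → Y ∈ P)
    (hPsum : ∀ ⦃X Y : C⦄, X ∈ P → Y ∈ P → (X ⊞ Y) ∈ P)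
    (hPconn : ∀ ⦃X Y : C⦄, X ∈ P → Y ∈ P → ∀ n : ℤ, 1 ≤ n → ∀ f : X ⟶ Y⟦n⟧, f = 0) :
    ∀ (n k : ℕ), k < n → ∀ {R' M K : C}, R' ∈ shiftSet (k : ℤ) P → M ∈ V P n →
      ∀ {u : R' ⟶ M} {v : M ⟶ K} {w : K ⟶ R'⟦(1:ℤ)⟧},
        (Triangle.mk u v w ∈ distTriang C) → K ∈ V P n := by
  intro n
  induction n with
  | zero => omega
  | succ m ih =>
    intro k hk R' M K hR' hM u v w hT
    simp only [V] at hM ⊢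
    obtain ⟨M₁, S, a, b, c, hMT, hM₁, hS⟩ := hM
    have hub : u ≫ b = 0 :=
      shiftSet_hom_zero hPconn hR' hS (by omega) (u ≫ b)
    rcases Nat.lt_succ_iff_lt_or_eq.mp hk with hkm | rfl
    · -- inductive step: push `u` into `M₁`
      obtain ⟨u', hu'⟩ := Triangle.coyoneda_exact₂ _ hMT u hub
      obtain ⟨K', k₁, k₂, hK'⟩ := distinguished_cocone_triangle u'
      have oct := Triangulated.someOctahedron (u₁₂ := u') (u₂₃ := a)
        hu'.symm hK' hMT hT
      have hK'V : K' ∈ V P m := ih k hkm hR' hM₁ hK'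
      exact mem_star_of_triangle (Triangle.mk oct.m₁ oct.m₃ (c ≫ k₁⟦1⟧')) oct.mem hK'V hS
    · -- base case `k = m`: merge the cell at the top
      obtain ⟨L, l₁, l₂, hL⟩ := distinguished_cocone_triangle (0 : R' ⟶ S)
      have oct := Triangulated.someOctahedron (u₁₂ := u) (u₂₃ := b)
        hub hT (rot_of_distTriang _ hMT) hL
      -- split L ≅ S ⊞ R'⟦1⟧
      have h0 : ((Triangle.mk (0 : R' ⟶ S) l₁ l₂).rotate).mor₃ = 0 := by
        simp [Triangle.rotate, Triangle.mk]; rfl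
      obtain ⟨eL, -, -⟩ := exists_iso_binaryBiproduct_of_distTriang _
        (rot_of_distTriang _ hL) h0
      -- K sits in a triangle M₁⟦1⟧⟦-1⟧ → K → L
      have h2 := inv_rot_of_distTriang _ oct.mem
      refine mem_star_of_triangle _ h2 ?_ ?_
      · -- first object: M₁⟦1⟧⟦-1⟧ ≅ M₁ ∈ V P m
        exact V_iso hPiso _
          (((shiftFunctorCompIsoId C (1 : ℤ) (-1) (by omega)).app M₁).symm) hM₁
      · -- third object: L ∈ shiftSet (m+1) P
        obtain ⟨Q, hQ, ⟨eS⟩⟩ := hS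
        obtain ⟨R, hR, ⟨eR⟩⟩ := hR'
        refine ⟨Q ⊞ R, hPsum hQ hR, ⟨?_⟩⟩
        have eR1 : R'⟦(1:ℤ)⟧ ≅ R⟦(k : ℤ) + 1⟧ :=
          (shiftFunctor C (1 : ℤ)).mapIso eR ≪≫
            ((shiftFunctorAdd' C (k : ℤ) 1 ((k : ℤ) + 1) rfl).app R).symm
        exact eL ≪≫ biprod.mapIso eS eR1 ≪≫
          (biprodShiftIso (shiftFunctor C ((k : ℤ) + 1)) Q R).symm

/-- Lemma E: the cone of a map from `V P k` to `V P n`, `k < n`, remains in `V P n`. -/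
lemma coneE [IsTriangulated C]
    (hPiso : ∀ ⦃X Y : C⦄, (X ≅ Y) → X ∈ P → Y ∈ P)
    (hPsum : ∀ ⦃X Y : C⦄, X ∈ P → Y ∈ P → (X ⊞ Y) ∈ P)
    (hPconn : ∀ ⦃X Y : C⦄, X ∈ P → Y ∈ P → ∀ n : ℤ, 1 ≤ n → ∀ f : X ⟶ Y⟦n⟧, f = 0) :
    ∀ (k : ℕ) {n : ℕ}, k < n → ∀ {A B N : C}, A ∈ V P k → B ∈ V P n →
      ∀ {g : A ⟶ B} {v : B ⟶ N} {w : N ⟶ A⟦(1:ℤ)⟧},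
        (Triangle.mk g v w ∈ distTriang C) → N ∈ V P n := by
  intro k
  induction k with
  | zero =>
    intro n hn A B N hA hB g v w hT
    have hA' : A ∈ shiftSet ((0 : ℕ) : ℤ) P := by
      refine ⟨A, hA, ⟨?_⟩⟩
      exact (((shiftFunctorZero C ℤ).app A).symm : A ≅ A⟦(0:ℤ)⟧)
    exact coneH hPiso hPsum hPconn n 0 hn hA' hB hT
  | succ m ih =>
    intro n hn A B N hA hB g v w hT
    simp only [V] at hA
    obtain ⟨A₁, R', α, π, θ, hAT, hA₁, hR'⟩ := hA
    obtain ⟨M', m₁', m₂', hM'T⟩ := distinguished_cocone_triangle (α ≫ g)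
    have oct := Triangulated.someOctahedron (u₁₂ := α) (u₂₃ := g) rfl hAT hT hM'T
    have hM' : M' ∈ V P n := ih (by omega) hA₁ hB hM'T
    have hR'' : R' ∈ shiftSet ((m + 1 : ℕ) : ℤ) P := by
      rwa [show ((m + 1 : ℕ) : ℤ) = (m : ℤ) + 1 by push_cast; ring]
    exact coneH hPiso hPsum hPconn n (m + 1) hn hR'' hM' oct.mem

/-- Lemma G: peeling off a top cell which is a direct summand. -/
lemma lemG [IsTriangulated C]
    (hPiso : ∀ ⦃X Y : C⦄, (X ≅ Y) → X ∈ P → Y ∈ P)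
    (hPsum : ∀ ⦃X Y : C⦄, X ∈ P → Y ∈ P → (X ⊞ Y) ∈ P)
    (hPconn : ∀ ⦃X Y : C⦄, X ∈ P → Y ∈ P → ∀ n : ℤ, 1 ≤ n → ∀ f : X ⟶ Y⟦n⟧, f = 0)
    (m : ℕ) {R' Z : C} (hR' : R' ∈ shiftSet ((m : ℤ) + 1) P)
    (hW : (R' ⊞ Z) ∈ V P (m + 1)) : Z ∈ V P (m + 1) := by
  simp only [V] at hW ⊢
  obtain ⟨W₁, S, a, b, c, hWT, hW₁, hS⟩ := hW
  have h₁₂ : Triangle.mk (biprod.inr : Z ⟶ R' ⊞ Z) biprod.fst 0 ∈ distTriang C := by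
    refine isomorphic_distinguished _ (binaryBiproductTriangle_distinguished Z R') _ ?_
    exact Triangle.isoMk _ _ (Iso.refl _) (biprod.braiding R' Z) (Iso.refl _)
      (by apply biprod.hom_ext <;> simp [biprod.braiding, Triangle.mk, binaryBiproductTriangle])
      (by simp [biprod.braiding, Triangle.mk, binaryBiproductTriangle]) (by simp [Triangle.mk, binaryBiproductTriangle])
  obtain ⟨K, k₁, k₂, hK⟩ := distinguished_cocone_triangle ((biprod.inr : Z ⟶ R' ⊞ Z) ≫ b)
  have oct := Triangulated.someOctahedron (u₁₂ := (biprod.inr : Z ⟶ R' ⊞ Z)) (u₂₃ := b)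
    rfl h₁₂ (rot_of_distTriang _ hWT) hK
  have haf : a ≫ (biprod.fst : R' ⊞ Z ⟶ R') = 0 :=
    V_hom_zero hPconn m hW₁ (by omega) hR' _
  have h0 : (Triangle.mk oct.m₁ oct.m₃ ((-a⟦(1:ℤ)⟧') ≫ (biprod.fst : R' ⊞ Z ⟶ R')⟦1⟧')).mor₃
      = 0 := by
    have : ((-a⟦(1:ℤ)⟧') ≫ (biprod.fst : R' ⊞ Z ⟶ R')⟦1⟧') = 0 := by
      simp [← Functor.map_comp, haf]
    exact this
  obtain ⟨eK, -, -⟩ := exists_iso_binaryBiproduct_of_distTriang _ oct.mem h0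
  -- eK : K ≅ R' ⊞ W₁⟦1⟧
  have h2 := inv_rot_of_distTriang _ hK
  refine mem_star_of_triangle _ h2 ?_ hS
  -- K⟦-1⟧ ∈ V P m
  obtain ⟨R, hR, ⟨eR⟩⟩ := hR'
  have e₁ : (R'⟦(-1 : ℤ)⟧ : C) ≅ R⟦(m : ℤ)⟧ :=
    (shiftFunctor C (-1 : ℤ)).mapIso eR ≪≫
      ((shiftFunctorAdd' C ((m : ℤ) + 1) (-1) (m : ℤ) (by ring)).app R).symm
  have e₂ : (W₁⟦(1:ℤ)⟧⟦(-1:ℤ)⟧ : C) ≅ W₁ :=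
    (shiftFunctorCompIsoId C (1 : ℤ) (-1) (by omega)).app W₁
  have eC : (W₁ ⊞ (R⟦(m : ℤ)⟧ : C)) ≅ K⟦(-1 : ℤ)⟧ :=
    (biprod.braiding _ _ ≪≫ (biprod.mapIso e₁ e₂).symm ≪≫
      (biprodShiftIso (shiftFunctor C (-1 : ℤ)) R' (W₁⟦(1:ℤ)⟧)).symm ≪≫
      ((shiftFunctor C (-1 : ℤ)).mapIso eK).symm)
  have hmem : (W₁ ⊞ (R⟦(m : ℤ)⟧ : C)) ∈ V P m :=
    biprodV hPiso hPsum m hW₁ ⟨R, hR, ⟨Iso.refl _⟩⟩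
  exact V_iso hPiso m eC hmem

/-- Main lemma: `V P (m+1)` is stable under kernels of retractions. -/
lemma vMain [IsTriangulated C]
    (hPiso : ∀ ⦃X Y : C⦄, (X ≅ Y) → X ∈ P → Y ∈ P)
    (hPsum : ∀ ⦃X Y : C⦄, X ∈ P → Y ∈ P → (X ⊞ Y) ∈ P)
    (hPconn : ∀ ⦃X Y : C⦄, X ∈ P → Y ∈ P → ∀ n : ℤ, 1 ≤ n → ∀ f : X ⟶ Y⟦n⟧, f = 0)
    (m : ℕ) {X Z : C} (hX : X ∈ V P (m + 1)) (hXZ : (X ⊞ Z) ∈ V P (m + 1)) :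
    Z ∈ V P (m + 1) := by
  have hX' := hX
  simp only [V] at hX'
  obtain ⟨X₁, R', α, π, θ, hXT, hX₁, hR'⟩ := hX'
  obtain ⟨M, m₁', m₂', hM⟩ := distinguished_cocone_triangle (α ≫ (biprod.inl : X ⟶ X ⊞ Z))
  have oct := Triangulated.someOctahedron (u₁₂ := α) (u₂₃ := (biprod.inl : X ⟶ X ⊞ Z))
    rfl hXT (binaryBiproductTriangle_distinguished X Z) hM
  have hMV : M ∈ V P (m + 1) := coneE hPiso hPsum hPconn m (by omega) hX₁ hXZ hM
  have h0 : (Triangle.mk oct.m₁ oct.m₃ ((0 : Z ⟶ X⟦(1:ℤ)⟧) ≫ π⟦1⟧')).mor₃ = 0 := by simp [Triangle.mk]; rfl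
  obtain ⟨eM, -, -⟩ := exists_iso_binaryBiproduct_of_distTriang _ oct.mem h0
  exact lemG hPiso hPsum hPconn m hR' (V_iso hPiso (m + 1) eM hMV)

end Aux

theorem statement2 [IsTriangulated C] (d : ℕ) (hd : 1 ≤ d) (P I : Set C) (hIP : I ⊆ P)
    (hPiso : ∀ ⦃X Y : C⦄, (X ≅ Y) → X ∈ P → Y ∈ P)
    (hPsum : ∀ ⦃X Y : C⦄, X ∈ P → Y ∈ P → (X ⊞ Y) ∈ P)
    (hPzero : ∀ ⦃X : C⦄, IsZero X → X ∈ P)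
    (hPconn : ∀ ⦃X Y : C⦄, X ∈ P → Y ∈ P → ∀ n : ℤ, 1 ≤ n → ∀ f : X ⟶ Y⟦n⟧, f = 0)
    (hIiso : ∀ ⦃X Y : C⦄, (X ≅ Y) → X ∈ I → Y ∈ I)
    (hIsum : ∀ ⦃X Y : C⦄, X ∈ I → Y ∈ I → (X ⊞ Y) ∈ I)
    (hIzero : ∀ ⦃X : C⦄, IsZero X → X ∈ I)
    {X Z Y : C} (hX : X ∈ V P (d + 1) ∩ extKer I) (hY : Y ∈ V P (d + 1) ∩ extKer I)
    (hYXZ : Nonempty (Y ≅ X ⊞ Z)) :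
    Z ∈ V P (d + 1) ∩ extKer I := by
  obtain ⟨e⟩ := hYXZ
  constructor
  · -- Z ∈ V P (d+1)
    have hXZ : (X ⊞ Z) ∈ V P (d + 1) := V_iso hPiso (d + 1) e hY.1
    exact vMain hPiso hPsum hPconn d hX.1 hXZ
  · -- Z ∈ extKer I
    intro I' hI' m hm f
    have hg : e.hom ≫ biprod.snd ≫ f = 0 := hY.2 I' hI' m hm _
    have : f = (biprod.inr ≫ e.inv) ≫ (e.hom ≫ biprod.snd ≫ f) := by simp
    rw [this, hg, comp_zero]

end AuslanderIyamaStmt2
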